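/- Let Ω ⊂ ℂ be a bounded open set, h : Ω → ℂ a C¹ map with finite Dirichlet energy, and η a test function on Ω. For all ε in a neighborhood of 0 the map z_ε(ξ) = ξ + ε·η(ξ) is a C∞ diffeomorphism of Ω onto itself with positive Jacobian; set H_ε = h ∘ z_ε⁻¹ and e(ε) = E[H_ε]. Then e is twice differentiable at ε = 0 and its second derivative there equals 8·[ (1/2)·∫_Ω (|h_z|² + |h_z̄|²)·|η_z̄|² dA + Re ∫_Ω h_z·conj(h_z̄)·η_z·η_z̄ dA ]. -/

import Mathlib

/-!
Substituting `ξ = w + ε η(w)` in `e(ε)` and computing the Wirtinger derivatives of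
`h ∘ z_ε⁻¹` by the chain rule for the inverse map, the integrand becomes
`S(w) + (A(w) ε + B(w) ε²) / J_ε(w)`, where `S = |h_z|² + |h_z̄|²` and
`J_ε = 1 + C ε + D ε²` is the Jacobian of `z_ε`; the coefficients `A, B, C, D` are built from
the Wirtinger derivatives of `h` and `η` and vanish off `supp η`. So `e(ε) - E[h]` is the
integral of a rational function of `ε` whose `ε`-derivatives are continuous and supported in
the compact set `supp η`; both derivatives may therefore be taken under the integral sign, and
the second one at `0` is `∫ (2B - 2AC)`, which rearranges to the stated formula.
-/

open Complex MeasureTheory Set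

/-- Wirtinger derivative `∂f/∂z` via the real Fréchet derivative. -/
noncomputable def wdz (f : ℂ → ℂ) (z : ℂ) : ℂ :=
  (1 / 2 : ℂ) * (fderiv ℝ f z 1 - Complex.I * fderiv ℝ f z Complex.I)

/-- Wirtinger derivative `∂f/∂z̄` via the real Fréchet derivative. -/
noncomputable def wdzbar (f : ℂ → ℂ) (z : ℂ) : ℂ :=
  (1 / 2 : ℂ) * (fderiv ℝ f z 1 + Complex.I * fderiv ℝ f z Complex.I)

/-- Dirichlet energy of `f` on `Ω`. -/
noncomputable def energy (Ω : Set ℂ) (f : ℂ → ℂ) : ℝ :=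
  ∫ z in Ω, ((norm (wdz f z)) ^ 2 + (norm (wdzbar f z)) ^ 2)

/-- A test function on `Ω`: smooth with compact support contained in `Ω`. -/
def IsTestFunction (Ω : Set ℂ) (η : ℂ → ℂ) : Prop :=
  ContDiff ℝ (⊤ : ℕ∞) η ∧ IsCompact (tsupport η) ∧ tsupport η ⊆ Ω

/-- An admissible change of variables of `Ω`: a `C¹` diffeomorphism of `Ω` onto itself
with everywhere positive Jacobian, equal to the identity outside a compact subset of `Ω`. -/
structure IsAdmissibleChange (Ω : Set ℂ) (ξ : ℂ → ℂ) : Prop where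
  contDiffOn : ContDiffOn ℝ 1 ξ Ω
  bijOn : Set.BijOn ξ Ω Ω
  jac_pos : ∀ z ∈ Ω, (norm (wdz ξ z)) ^ 2 - (norm (wdzbar ξ z)) ^ 2 > 0
  eq_id : ∃ K : Set ℂ, IsCompact K ∧ K ⊆ Ω ∧ ∀ z ∉ K, ξ z = z

/-- `h` is Hopf harmonic on `Ω`: `h` is `C¹` and its Hopf product is holomorphic on `Ω`. -/
def IsHopfHarmonic (Ω : Set ℂ) (h : ℂ → ℂ) : Prop :=
  ContDiffOn ℝ 1 h Ω ∧
    DifferentiableOn ℂ (fun z => wdz h z * (starRingEnd ℂ) (wdzbar h z)) Ω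

open scoped ComplexConjugate

noncomputable def wdzCLM (L : ℂ →L[ℝ] ℂ) : ℂ := (1 / 2 : ℂ) * (L 1 - I * L I)

noncomputable def wdzbarCLM (L : ℂ →L[ℝ] ℂ) : ℂ := (1 / 2 : ℂ) * (L 1 + I * L I)

lemma wdz_eq_wdzCLM (f : ℂ → ℂ) (z : ℂ) : wdz f z = wdzCLM (fderiv ℝ f z) := rfl

lemma wdzbar_eq_wdzbarCLM (f : ℂ → ℂ) (z : ℂ) : wdzbar f z = wdzbarCLM (fderiv ℝ f z) := rfl

lemma continuous_wdzCLM : Continuous wdzCLM := by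
  unfold wdzCLM; fun_prop

lemma continuous_wdzbarCLM : Continuous wdzbarCLM := by
  unfold wdzbarCLM; fun_prop

lemma ContinuousLinearMap.apply_eq_wdzCLM_mul_add (L : ℂ →L[ℝ] ℂ) (v : ℂ) :
    L v = wdzCLM L * v + wdzbarCLM L * conj v := by
  have hv : v = v.re • (1 : ℂ) + v.im • I := by simp [Complex.real_smul, Complex.re_add_im]
  have hconj : conj v = (v.re : ℂ) - (v.im : ℂ) * I := by simp [Complex.ext_iff]
  conv_lhs => rw [hv]
  rw [L.map_add, L.map_smul, L.map_smul, hconj]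
  simp only [Complex.real_smul, wdzCLM, wdzbarCLM]
  linear_combination ((1 / 2 : ℂ) * (L 1 - I * L I)) * Complex.re_add_im v +
    ((v.im : ℂ) * L I) * Complex.I_sq

lemma wdzCLM_comp (L M : ℂ →L[ℝ] ℂ) :
    wdzCLM (L.comp M) = wdzCLM L * wdzCLM M + wdzbarCLM L * conj (wdzbarCLM M) := by
  have hM1 : M 1 = wdzCLM M + wdzbarCLM M := by simpa using M.apply_eq_wdzCLM_mul_add 1
  have hMI : M I = wdzCLM M * I + wdzbarCLM M * -I := by
    simpa [Complex.conj_I] using M.apply_eq_wdzCLM_mul_add I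
  have hcomp : wdzCLM (L.comp M) = (1 / 2 : ℂ) * (L (M 1) - I * L (M I)) := rfl
  rw [hcomp, L.apply_eq_wdzCLM_mul_add (M 1), L.apply_eq_wdzCLM_mul_add (M I), hM1, hMI]
  simp only [map_add, map_mul, map_neg, Complex.conj_I]
  ring_nf
  simp only [Complex.I_sq]
  ring

lemma wdzbarCLM_comp (L M : ℂ →L[ℝ] ℂ) :
    wdzbarCLM (L.comp M) = wdzCLM L * wdzbarCLM M + wdzbarCLM L * conj (wdzCLM M) := by
  have hM1 : M 1 = wdzCLM M + wdzbarCLM M := by simpa using M.apply_eq_wdzCLM_mul_add 1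
  have hMI : M I = wdzCLM M * I + wdzbarCLM M * -I := by
    simpa [Complex.conj_I] using M.apply_eq_wdzCLM_mul_add I
  have hcomp : wdzbarCLM (L.comp M) = (1 / 2 : ℂ) * (L (M 1) + I * L (M I)) := rfl
  rw [hcomp, L.apply_eq_wdzCLM_mul_add (M 1), L.apply_eq_wdzCLM_mul_add (M I), hM1, hMI]
  simp only [map_add, map_mul, map_neg, Complex.conj_I]
  ring_nf
  simp only [Complex.I_sq]
  ring

lemma wdzCLM_id : wdzCLM (.id ℝ ℂ) = 1 := by
  simp only [wdzCLM, ContinuousLinearMap.id_apply]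
  linear_combination (-1 / 2 : ℂ) * Complex.I_sq

lemma wdzbarCLM_id : wdzbarCLM (.id ℝ ℂ) = 0 := by
  simp only [wdzbarCLM, ContinuousLinearMap.id_apply]
  linear_combination (1 / 2 : ℂ) * Complex.I_sq

lemma wdzCLM_id_add_smul (L : ℂ →L[ℝ] ℂ) (t : ℝ) :
    wdzCLM (.id ℝ ℂ + (t : ℂ) • L) = 1 + t * wdzCLM L := by
  simp only [wdzCLM, _root_.add_apply, _root_.smul_apply,
    ContinuousLinearMap.id_apply, smul_eq_mul]
  linear_combination (-1 / 2 : ℂ) * Complex.I_sq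

lemma wdzbarCLM_id_add_smul (L : ℂ →L[ℝ] ℂ) (t : ℝ) :
    wdzbarCLM (.id ℝ ℂ + (t : ℂ) • L) = t * wdzbarCLM L := by
  simp only [wdzbarCLM, _root_.add_apply, _root_.smul_apply,
    ContinuousLinearMap.id_apply, smul_eq_mul]
  linear_combination (1 / 2 : ℂ) * Complex.I_sq

lemma ContinuousLinearMap.det_eq_sq_norm_wdzCLM_sub (L : ℂ →L[ℝ] ℂ) :
    L.det = ‖wdzCLM L‖ ^ 2 - ‖wdzbarCLM L‖ ^ 2 := by
  rw [ContinuousLinearMap.det, ← LinearMap.det_toMatrix Complex.basisOneI, Matrix.det_fin_two]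
  simp only [LinearMap.toMatrix_apply, Complex.coe_basisOneI_repr, Complex.coe_basisOneI,
    wdzCLM, wdzbarCLM, Complex.sq_norm, Complex.normSq_apply]
  simp only [Matrix.cons_val_zero, Matrix.cons_val_one, Matrix.cons_val_fin_one, Fin.isValue,
    coe_coe, one_div, mul_re, mul_im, add_re, add_im, sub_re, sub_im, inv_re, inv_im, re_ofNat,
    im_ofNat, normSq_ofNat, I_re, I_im]
  ring

lemma det_id_add_smul (L : ℂ →L[ℝ] ℂ) (t : ℝ) :
    (ContinuousLinearMap.id ℝ ℂ + (t : ℂ) • L).det =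
      1 + 2 * (wdzCLM L).re * t + (‖wdzCLM L‖ ^ 2 - ‖wdzbarCLM L‖ ^ 2) * t ^ 2 := by
  rw [ContinuousLinearMap.det_eq_sq_norm_wdzCLM_sub, wdzCLM_id_add_smul, wdzbarCLM_id_add_smul]
  simp only [Complex.sq_norm, Complex.normSq_apply, Complex.add_re, Complex.add_im,
    Complex.mul_re, Complex.mul_im, Complex.one_re, Complex.one_im, Complex.ofReal_re,
    Complex.ofReal_im]
  ring

lemma wirtinger_mul_det_of_comp_eq_id {L M : ℂ →L[ℝ] ℂ} (hML : M.comp L = .id ℝ ℂ) :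
    wdzCLM M * L.det = conj (wdzCLM L) ∧ wdzbarCLM M * L.det = -wdzbarCLM L := by
  have h1 := wdzCLM_comp M L
  have h0 := wdzbarCLM_comp M L
  rw [hML, wdzCLM_id] at h1
  rw [hML, wdzbarCLM_id] at h0
  have hdet : (L.det : ℂ) = wdzCLM L * conj (wdzCLM L) - wdzbarCLM L * conj (wdzbarCLM L) := by
    rw [L.det_eq_sq_norm_wdzCLM_sub, Complex.mul_conj, Complex.mul_conj]
    push_cast [Complex.sq_norm]; ring
  rw [hdet]
  constructor
  · linear_combination (-conj (wdzCLM L)) * h1 + conj (wdzbarCLM L) * h0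
  · linear_combination wdzbarCLM L * h1 - wdzCLM L * h0

lemma sq_det_mul_wirtinger_comp_of_comp_eq_id {L M : ℂ →L[ℝ] ℂ} (hML : M.comp L = .id ℝ ℂ)
    (N : ℂ →L[ℝ] ℂ) :
    L.det ^ 2 * (‖wdzCLM (N.comp M)‖ ^ 2 + ‖wdzbarCLM (N.comp M)‖ ^ 2) =
      (‖wdzCLM N‖ ^ 2 + ‖wdzbarCLM N‖ ^ 2) * (‖wdzCLM L‖ ^ 2 + ‖wdzbarCLM L‖ ^ 2)
        - 4 * (wdzCLM N * conj (wdzbarCLM N) * conj (wdzCLM L) * wdzbarCLM L).re := by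
  obtain ⟨hp, hq⟩ := wirtinger_mul_det_of_comp_eq_id hML
  have hz : wdzCLM (N.comp M) * L.det =
      wdzCLM N * conj (wdzCLM L) - wdzbarCLM N * conj (wdzbarCLM L) := by
    rw [wdzCLM_comp, add_mul, mul_assoc, hp, mul_assoc, ← Complex.conj_ofReal, ← map_mul, hq]
    simp only [map_neg]; ring
  have hzbar : wdzbarCLM (N.comp M) * L.det =
      wdzbarCLM N * wdzCLM L - wdzCLM N * wdzbarCLM L := by
    rw [wdzbarCLM_comp, add_mul, mul_assoc, hq, mul_assoc, ← Complex.conj_ofReal, ← map_mul, hp,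
      Complex.conj_conj]
    ring
  have hnorm : ∀ z : ℂ, L.det ^ 2 * ‖z‖ ^ 2 = ‖z * L.det‖ ^ 2 := fun z => by
    rw [norm_mul, Complex.norm_real, Real.norm_eq_abs, mul_pow, sq_abs, mul_comm]
  rw [mul_add, hnorm, hnorm, hz, hzbar]
  simp only [Complex.sq_norm, Complex.normSq_apply, Complex.sub_re, Complex.sub_im,
    Complex.mul_re, Complex.mul_im, Complex.conj_re, Complex.conj_im]
  ring

lemma wirtinger_eq_zero_of_notMem_tsupport {f : ℂ → ℂ} {w : ℂ} (hw : w ∉ tsupport f) :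
    wdz f w = 0 ∧ wdzbar f w = 0 := by
  have hf : fderiv ℝ f w = 0 := fderiv_of_notMem_tsupport ℝ hw
  simp [wdz_eq_wdzCLM, wdzbar_eq_wdzbarCLM, hf, wdzCLM, wdzbarCLM]

lemma ContDiffOn.continuousOn_wdz {f : ℂ → ℂ} {Ω : Set ℂ} (hf : ContDiffOn ℝ 1 f Ω)
    (hΩ : IsOpen Ω) : ContinuousOn (wdz f) Ω :=
  continuous_wdzCLM.comp_continuousOn (hf.continuousOn_fderiv_of_isOpen hΩ le_rfl)

lemma ContDiffOn.continuousOn_wdzbar {f : ℂ → ℂ} {Ω : Set ℂ} (hf : ContDiffOn ℝ 1 f Ω)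
    (hΩ : IsOpen Ω) : ContinuousOn (wdzbar f) Ω :=
  continuous_wdzbarCLM.comp_continuousOn (hf.continuousOn_fderiv_of_isOpen hΩ le_rfl)

lemma HasCompactSupport.wdz {f : ℂ → ℂ} (hf : HasCompactSupport f) :
    HasCompactSupport (wdz f) := by
  rw [show _root_.wdz f = wdzCLM ∘ fderiv ℝ f from rfl]
  exact (hf.fderiv (𝕜 := ℝ)).comp_left (by simp [wdzCLM])

lemma HasCompactSupport.wdzbar {f : ℂ → ℂ} (hf : HasCompactSupport f) :
    HasCompactSupport (wdzbar f) := by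
  rw [show _root_.wdzbar f = wdzbarCLM ∘ fderiv ℝ f from rfl]
  exact (hf.fderiv (𝕜 := ℝ)).comp_left (by simp [wdzbarCLM])

noncomputable def energyDensity (f : ℂ → ℂ) (z : ℂ) : ℝ := ‖wdz f z‖ ^ 2 + ‖wdzbar f z‖ ^ 2

noncomputable def hopf (f : ℂ → ℂ) (z : ℂ) : ℂ := wdz f z * conj (wdzbar f z)

lemma norm_hopf_le_energyDensity (f : ℂ → ℂ) (z : ℂ) : ‖hopf f z‖ ≤ energyDensity f z := by
  rw [hopf, energyDensity, norm_mul, Complex.norm_conj]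
  nlinarith [sq_nonneg (‖wdz f z‖ - ‖wdzbar f z‖)]

lemma sq_det_mul_energyDensity_comp {f g h : ℂ → ℂ} {L : ℂ →L[ℝ] ℂ} {w : ℂ}
    (hf : HasFDerivAt f L w) (hg : DifferentiableAt ℝ g (f w)) (hh : DifferentiableAt ℝ h w)
    (hgf : ∀ᶠ x in nhds w, g (f x) = x) :
    L.det ^ 2 * energyDensity (h ∘ g) (f w) =
      energyDensity h w * (‖wdzCLM L‖ ^ 2 + ‖wdzbarCLM L‖ ^ 2)
        - 4 * (hopf h w * conj (wdzCLM L) * wdzbarCLM L).re := by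
  have hgw : g (f w) = w := hgf.self_of_nhds
  have hML : (fderiv ℝ g (f w)).comp L = .id ℝ ℂ := by
    rw [← hf.fderiv, ← fderiv_comp w hg hf.differentiableAt, ← fderiv_id (𝕜 := ℝ) (x := w)]
    exact Filter.EventuallyEq.fderiv_eq hgf
  have hcomp : fderiv ℝ (h ∘ g) (f w) = (fderiv ℝ h w).comp (fderiv ℝ g (f w)) := by
    rw [fderiv_comp _ (by rwa [hgw]) hg, hgw]
  rw [energyDensity, wdz_eq_wdzCLM, wdzbar_eq_wdzbarCLM, hcomp,
    sq_det_mul_wirtinger_comp_of_comp_eq_id hML]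
  rfl

section QuadRatio

variable {a b c d t : ℝ}

noncomputable def quadRatio (a b c d t : ℝ) : ℝ := (a * t + b * t ^ 2) / (1 + c * t + d * t ^ 2)

noncomputable def quadRatioDeriv (a b c d t : ℝ) : ℝ :=
  (a + 2 * b * t + (b * c - a * d) * t ^ 2) / (1 + c * t + d * t ^ 2) ^ 2

noncomputable def quadRatioDeriv2 (a b c d t : ℝ) : ℝ :=
  ((2 * b + 2 * (b * c - a * d) * t) * (1 + c * t + d * t ^ 2)
    - 2 * (a + 2 * b * t + (b * c - a * d) * t ^ 2) * (c + 2 * d * t)) /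
      (1 + c * t + d * t ^ 2) ^ 3

lemma hasDerivAt_quadratic (p q r t : ℝ) :
    HasDerivAt (fun s => p + q * s + r * s ^ 2) (q + 2 * r * t) t := by
  refine ((((hasDerivAt_id t).const_mul q).const_add p).add
    ((hasDerivAt_pow 2 t).const_mul r)).congr_deriv ?_
  simp only [Nat.cast_ofNat, Nat.add_one_sub_one, pow_one]
  ring

lemma hasDerivAt_quadRatio (hD : 1 + c * t + d * t ^ 2 ≠ 0) :
    HasDerivAt (quadRatio a b c d) (quadRatioDeriv a b c d t) t := by
  have := ((hasDerivAt_quadratic 0 a b t).div (hasDerivAt_quadratic 1 c d t) hD)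
  simp only [zero_add] at this
  exact this.congr_deriv (by unfold quadRatioDeriv; ring)

lemma hasDerivAt_quadRatioDeriv (hD : 1 + c * t + d * t ^ 2 ≠ 0) :
    HasDerivAt (quadRatioDeriv a b c d) (quadRatioDeriv2 a b c d t) t := by
  have := (hasDerivAt_quadratic a (2 * b) (b * c - a * d) t).div
    ((hasDerivAt_quadratic 1 c d t).pow 2) (pow_ne_zero 2 hD)
  exact this.congr_deriv (by unfold quadRatioDeriv2; simp only [Pi.pow_apply]; field_simp; ring)

lemma quadRatioDeriv2_zero : quadRatioDeriv2 a b c d 0 = 2 * b - 2 * a * c := by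
  simp [quadRatioDeriv2]

variable {X : Type*} [TopologicalSpace X] {s : Set X} {a b c d t : X → ℝ}

lemma ContinuousOn.quadRatio (ha : ContinuousOn a s) (hb : ContinuousOn b s)
    (hc : ContinuousOn c s) (hd : ContinuousOn d s) (ht : ContinuousOn t s)
    (hD : ∀ x ∈ s, 1 + c x * t x + d x * t x ^ 2 ≠ 0) :
    ContinuousOn (fun x => _root_.quadRatio (a x) (b x) (c x) (d x) (t x)) s := by
  unfold _root_.quadRatio
  exact ContinuousOn.div (by fun_prop) (by fun_prop) hD

lemma ContinuousOn.quadRatioDeriv (ha : ContinuousOn a s) (hb : ContinuousOn b s)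
    (hc : ContinuousOn c s) (hd : ContinuousOn d s) (ht : ContinuousOn t s)
    (hD : ∀ x ∈ s, 1 + c x * t x + d x * t x ^ 2 ≠ 0) :
    ContinuousOn (fun x => _root_.quadRatioDeriv (a x) (b x) (c x) (d x) (t x)) s := by
  unfold _root_.quadRatioDeriv
  exact ContinuousOn.div (by fun_prop) (by fun_prop) fun x hx => pow_ne_zero 2 (hD x hx)

lemma ContinuousOn.quadRatioDeriv2 (ha : ContinuousOn a s) (hb : ContinuousOn b s)
    (hc : ContinuousOn c s) (hd : ContinuousOn d s) (ht : ContinuousOn t s)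
    (hD : ∀ x ∈ s, 1 + c x * t x + d x * t x ^ 2 ≠ 0) :
    ContinuousOn (fun x => _root_.quadRatioDeriv2 (a x) (b x) (c x) (d x) (t x)) s := by
  unfold _root_.quadRatioDeriv2
  exact ContinuousOn.div (by fun_prop) (by fun_prop) fun x hx => pow_ne_zero 3 (hD x hx)

end QuadRatio

section ParametricIntegral

variable {α E : Type*} [TopologicalSpace α] [T2Space α] [MeasurableSpace α]
  [OpensMeasurableSpace α] [NormedAddCommGroup E]
  {μ : Measure α} [IsFiniteMeasureOnCompacts μ] {K : Set α}

lemma integrable_of_continuousOn_of_notMem_eq_zero {f : α → E} (hK : IsCompact K)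
    (hf : ContinuousOn f K) (hf0 : ∀ x ∉ K, f x = 0) : Integrable f μ :=
  (hf.integrableOn_compact hK).integrable_of_forall_notMem_eq_zero hf0

theorem hasDerivAt_integral_of_continuousOn_of_notMem_eq_zero [NormedSpace ℝ E] {U : Set ℝ}
    (hU : IsOpen U) (hK : IsCompact K) {F F' : ℝ → α → E}
    (hF : ContinuousOn (Function.uncurry F) (U ×ˢ K))
    (hF' : ContinuousOn (Function.uncurry F') (U ×ˢ K))
    (hF0 : ∀ t ∈ U, ∀ x ∉ K, F t x = 0) (hF'0 : ∀ t ∈ U, ∀ x ∉ K, F' t x = 0)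
    (hderiv : ∀ t ∈ U, ∀ x, HasDerivAt (F · x) (F' t x) t) {t₀ : ℝ} (ht₀ : t₀ ∈ U) :
    HasDerivAt (fun t => ∫ x, F t x ∂μ) (∫ x, F' t₀ x ∂μ) t₀ := by
  obtain ⟨r, hr, hrU⟩ := Metric.nhds_basis_closedBall.mem_iff.1 (hU.mem_nhds ht₀)
  have hballU : ∀ t ∈ Metric.ball t₀ r, t ∈ U := fun t ht => hrU (Metric.ball_subset_closedBall ht)
  obtain ⟨C, hC⟩ := ((isCompact_closedBall t₀ r).prod hK).exists_bound_of_continuousOn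
    (hF'.mono (prod_mono hrU subset_rfl))
  have hbound : ∀ x, ∀ t ∈ Metric.ball t₀ r, ‖F' t x‖ ≤ K.indicator (fun _ => C) x := by
    intro x t ht
    by_cases hx : x ∈ K
    · rw [indicator_of_mem hx]
      exact hC (t, x) ⟨Metric.ball_subset_closedBall ht, hx⟩
    · rw [indicator_of_notMem hx, hF'0 t (hballU t ht) x hx, norm_zero]
  have hFint : ∀ t ∈ U, Integrable (F t) μ := fun t ht =>
    integrable_of_continuousOn_of_notMem_eq_zero hK (hF.uncurry_left t ht) (hF0 t ht)
  have hF'int : Integrable (F' t₀) μ :=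
    integrable_of_continuousOn_of_notMem_eq_zero hK (hF'.uncurry_left t₀ ht₀) (hF'0 t₀ ht₀)
  refine (hasDerivAt_integral_of_dominated_loc_of_deriv_le (Metric.ball_mem_nhds t₀ hr) ?_
    (hFint t₀ ht₀) hF'int.aestronglyMeasurable (ae_of_all _ hbound) ?_
    (ae_of_all _ fun x t ht => hderiv t (hballU t ht) x)).2
  · filter_upwards [hU.mem_nhds ht₀] with t ht using (hFint t ht).aestronglyMeasurable
  · exact (integrable_indicator_iff hK.measurableSet).2 (integrableOn_const hK.measure_lt_top.ne)

end ParametricIntegral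

namespace InnerVariation

variable (h η : ℂ → ℂ)

noncomputable def coeffA (w : ℂ) : ℝ := -4 * (hopf h w * wdzbar η w).re

noncomputable def coeffB (w : ℂ) : ℝ :=
  2 * energyDensity h w * ‖wdzbar η w‖ ^ 2 - 4 * (hopf h w * conj (wdz η w) * wdzbar η w).re

noncomputable def coeffC (w : ℂ) : ℝ := 2 * (wdz η w).re

noncomputable def coeffD (w : ℂ) : ℝ := ‖wdz η w‖ ^ 2 - ‖wdzbar η w‖ ^ 2

noncomputable def jacobian (t : ℝ) (w : ℂ) : ℝ := 1 + coeffC η w * t + coeffD η w * t ^ 2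

noncomputable def density (t : ℝ) (w : ℂ) : ℝ :=
  quadRatio (coeffA h η w) (coeffB h η w) (coeffC η w) (coeffD η w) t

noncomputable def densityDeriv (t : ℝ) (w : ℂ) : ℝ :=
  quadRatioDeriv (coeffA h η w) (coeffB h η w) (coeffC η w) (coeffD η w) t

noncomputable def densityDeriv2 (t : ℝ) (w : ℂ) : ℝ :=
  quadRatioDeriv2 (coeffA h η w) (coeffB h η w) (coeffC η w) (coeffD η w) t

variable {h η} {Ω K : Set ℂ} {U : Set ℝ}

lemma jacobian_eq (t : ℝ) (w : ℂ) :
    jacobian η t w = ‖1 + t * wdz η w‖ ^ 2 - t ^ 2 * ‖wdzbar η w‖ ^ 2 := by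
  simp only [jacobian, coeffC, coeffD, Complex.sq_norm, Complex.normSq_apply, Complex.add_re,
    Complex.add_im, Complex.mul_re, Complex.mul_im, Complex.one_re, Complex.one_im,
    Complex.ofReal_re, Complex.ofReal_im]
  ring

lemma det_id_add_smul_fderiv (t : ℝ) (w : ℂ) :
    (ContinuousLinearMap.id ℝ ℂ + (t : ℂ) • fderiv ℝ η w).det = jacobian η t w := by
  rw [det_id_add_smul, jacobian, coeffC, coeffD, wdz_eq_wdzCLM, wdzbar_eq_wdzbarCLM]

lemma hasFDerivAt_id_add_mul {t : ℝ} {w : ℂ} (hη : DifferentiableAt ℝ η w) :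
    HasFDerivAt (fun x => x + (t : ℂ) * η x)
      (ContinuousLinearMap.id ℝ ℂ + (t : ℂ) • fderiv ℝ η w) w :=
  (hasFDerivAt_id w).add (hη.hasFDerivAt.const_mul (t : ℂ))

lemma jacobian_mul_energyDensity_comp {g : ℂ → ℂ} {t : ℝ} {w : ℂ}
    (hη : DifferentiableAt ℝ η w) (hh : DifferentiableAt ℝ h w)
    (hg : DifferentiableAt ℝ g (w + t * η w)) (hgf : ∀ᶠ x in nhds w, g (x + t * η x) = x)
    (hJ : 0 < jacobian η t w) :
    jacobian η t w * energyDensity (h ∘ g) (w + t * η w) = energyDensity h w + density h η t w := by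
  have key := sq_det_mul_energyDensity_comp (hasFDerivAt_id_add_mul hη) hg hh hgf
  rw [det_id_add_smul_fderiv, wdzCLM_id_add_smul, wdzbarCLM_id_add_smul, ← wdz_eq_wdzCLM,
    ← wdzbar_eq_wdzbarCLM] at key
  refine mul_left_cancel₀ hJ.ne' ?_
  rw [← mul_assoc, ← sq, key, density, quadRatio, ← jacobian, mul_add (jacobian η t w),
    mul_div_cancel₀ _ hJ.ne']
  rw [jacobian, coeffA, coeffB, coeffC, coeffD]
  simp only [Complex.sq_norm, Complex.normSq_apply, Complex.add_re, Complex.add_im,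
    Complex.mul_re, Complex.mul_im, Complex.one_re, Complex.one_im, Complex.ofReal_re,
    Complex.ofReal_im, Complex.conj_re, Complex.conj_im]
  ring

lemma energy_comp_eq {g : ℂ → ℂ} {t : ℝ} (hΩ : IsOpen Ω) (hh : DifferentiableOn ℝ h Ω)
    (hη : Differentiable ℝ η) (hbij : BijOn (fun w => w + (t : ℂ) * η w) Ω Ω)
    (hg : DifferentiableOn ℝ g Ω) (hgf : ∀ w ∈ Ω, g (w + t * η w) = w)
    (hJ : ∀ w ∈ Ω, 0 < jacobian η t w) (hS : IntegrableOn (energyDensity h) Ω)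
    (hψ : IntegrableOn (density h η t) Ω) :
    energy Ω (h ∘ g) = (∫ w in Ω, energyDensity h w) + ∫ w in Ω, density h η t w := by
  calc energy Ω (h ∘ g)
      = ∫ z in (fun w => w + (t : ℂ) * η w) '' Ω, energyDensity (h ∘ g) z := by
        rw [hbij.image_eq]; rfl
    _ = ∫ w in Ω, |(ContinuousLinearMap.id ℝ ℂ + (t : ℂ) • fderiv ℝ η w).det| •
          energyDensity (h ∘ g) (w + t * η w) :=
        integral_image_eq_integral_abs_det_fderiv_smul volume hΩ.measurableSet
          (fun w _ => (hasFDerivAt_id_add_mul (hη w)).hasFDerivWithinAt) hbij.injOn _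
    _ = ∫ w in Ω, (energyDensity h w + density h η t w) := by
        refine setIntegral_congr_fun hΩ.measurableSet fun w hw => ?_
        rw [det_id_add_smul_fderiv, abs_of_pos (hJ w hw), smul_eq_mul]
        exact jacobian_mul_energyDensity_comp (hη w) (hh.differentiableAt (hΩ.mem_nhds hw))
          (hg.differentiableAt (hΩ.mem_nhds (hbij.mapsTo hw)))
          (Filter.eventually_of_mem (hΩ.mem_nhds hw) hgf) (hJ w hw)
    _ = _ := integral_add hS hψ

lemma densities_eq_zero_of_notMem_tsupport (t : ℝ) {w : ℂ} (hw : w ∉ tsupport η) :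
    density h η t w = 0 ∧ densityDeriv h η t w = 0 ∧ densityDeriv2 h η t w = 0 := by
  obtain ⟨h1, h2⟩ := wirtinger_eq_zero_of_notMem_tsupport hw
  simp [density, densityDeriv, densityDeriv2, quadRatio, quadRatioDeriv, quadRatioDeriv2,
    coeffA, coeffB, h1, h2]

lemma jacobian_pos_of_tsupport_subset {t : ℝ} (hηΩ : tsupport η ⊆ Ω)
    (hJ : ∀ w ∈ Ω, 0 < jacobian η t w) (w : ℂ) : 0 < jacobian η t w := by
  by_cases hw : w ∈ tsupport η
  · exact hJ w (hηΩ hw)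
  · obtain ⟨h1, h2⟩ := wirtinger_eq_zero_of_notMem_tsupport hw
    simp [jacobian, coeffC, coeffD, h1, h2]

lemma hasDerivAt_density {t : ℝ} {w : ℂ} (hJ : jacobian η t w ≠ 0) :
    HasDerivAt (density h η · w) (densityDeriv h η t w) t :=
  hasDerivAt_quadRatio hJ

lemma hasDerivAt_densityDeriv {t : ℝ} {w : ℂ} (hJ : jacobian η t w ≠ 0) :
    HasDerivAt (densityDeriv h η · w) (densityDeriv2 h η t w) t :=
  hasDerivAt_quadRatioDeriv hJ

lemma continuousOn_coeffs (hΩ : IsOpen Ω) (hh : ContDiffOn ℝ 1 h Ω) (hη : ContDiffOn ℝ 1 η Ω) :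
    ContinuousOn (coeffA h η) Ω ∧ ContinuousOn (coeffB h η) Ω ∧
      ContinuousOn (coeffC η) Ω ∧ ContinuousOn (coeffD η) Ω := by
  have hwh := hh.continuousOn_wdz hΩ
  have hwbh := hh.continuousOn_wdzbar hΩ
  have hwη := hη.continuousOn_wdz hΩ
  have hwbη := hη.continuousOn_wdzbar hΩ
  have hre {f : ℂ → ℂ} (hf : ContinuousOn f Ω) : ContinuousOn (fun w => (f w).re) Ω :=
    Complex.continuous_re.comp_continuousOn hf
  have hP : ContinuousOn (hopf h) Ω := hwh.mul (Complex.continuous_conj.comp_continuousOn hwbh)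
  exact ⟨continuousOn_const.mul (hre (hP.mul hwbη)),
    ((continuousOn_const.mul ((hwh.norm.pow 2).add (hwbh.norm.pow 2))).mul (hwbη.norm.pow 2)).sub
      (continuousOn_const.mul (hre ((hP.mul (Complex.continuous_conj.comp_continuousOn hwη)).mul
        hwbη))),
    continuousOn_const.mul (hre hwη), (hwη.norm.pow 2).sub (hwbη.norm.pow 2)⟩

lemma continuousOn_densities (hΩ : IsOpen Ω) (hh : ContDiffOn ℝ 1 h Ω) (hη : ContDiffOn ℝ 1 η Ω)
    (hKΩ : K ⊆ Ω) (hJ : ∀ p ∈ U ×ˢ K, jacobian η p.1 p.2 ≠ 0) :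
    ContinuousOn (Function.uncurry (density h η)) (U ×ˢ K) ∧
      ContinuousOn (Function.uncurry (densityDeriv h η)) (U ×ˢ K) ∧
      ContinuousOn (Function.uncurry (densityDeriv2 h η)) (U ×ˢ K) := by
  have hsnd {f : ℂ → ℝ} (hf : ContinuousOn f Ω) :
      ContinuousOn (fun p : ℝ × ℂ => f p.2) (U ×ˢ K) :=
    hf.comp continuousOn_snd fun p hp => hKΩ hp.2
  obtain ⟨hA, hB, hC, hD⟩ := continuousOn_coeffs hΩ hh hη
  exact ⟨.quadRatio (hsnd hA) (hsnd hB) (hsnd hC) (hsnd hD) continuousOn_fst hJ,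
    .quadRatioDeriv (hsnd hA) (hsnd hB) (hsnd hC) (hsnd hD) continuousOn_fst hJ,
    .quadRatioDeriv2 (hsnd hA) (hsnd hB) (hsnd hC) (hsnd hD) continuousOn_fst hJ⟩

lemma hasDerivAt_integral_densities (hΩ : IsOpen Ω) (hh : ContDiffOn ℝ 1 h Ω)
    (hη : ContDiff ℝ 1 η) (hηc : HasCompactSupport η) (hηΩ : tsupport η ⊆ Ω) (hU : IsOpen U)
    (hJ : ∀ t ∈ U, ∀ w, 0 < jacobian η t w) {t : ℝ} (ht : t ∈ U) :
    IntegrableOn (density h η t) Ω ∧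
      HasDerivAt (fun s => ∫ w in Ω, density h η s w) (∫ w in Ω, densityDeriv h η t w) t ∧
      HasDerivAt (fun s => ∫ w in Ω, densityDeriv h η s w) (∫ w in Ω, densityDeriv2 h η t w) t := by
  have hzero (s : ℝ) {w : ℂ} (hw : w ∉ tsupport η) :=
    densities_eq_zero_of_notMem_tsupport (h := h) s hw
  obtain ⟨hψ, hψ', hψ''⟩ :=
    continuousOn_densities hΩ hh hη.contDiffOn hηΩ fun p hp => (hJ p.1 hp.1 p.2).ne'
  exact ⟨integrable_of_continuousOn_of_notMem_eq_zero hηc (hψ.uncurry_left t ht)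
      fun w hw => (hzero t hw).1,
    hasDerivAt_integral_of_continuousOn_of_notMem_eq_zero hU hηc hψ hψ'
      (fun s _ w hw => (hzero s hw).1) (fun s _ w hw => (hzero s hw).2.1)
      (fun s hs w => hasDerivAt_density (hJ s hs w).ne') ht,
    hasDerivAt_integral_of_continuousOn_of_notMem_eq_zero hU hηc hψ' hψ''
      (fun s _ w hw => (hzero s hw).2.1) (fun s _ w hw => (hzero s hw).2.2)
      (fun s hs w => hasDerivAt_densityDeriv (hJ s hs w).ne') ht⟩

lemma densityDeriv2_zero (w : ℂ) :
    densityDeriv2 h η 0 w =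
      4 * (energyDensity h w * ‖wdzbar η w‖ ^ 2) + 8 * (hopf h w * wdz η w * wdzbar η w).re := by
  rw [densityDeriv2, quadRatioDeriv2_zero, coeffA, coeffB, coeffC]
  simp only [Complex.mul_re, Complex.mul_im, Complex.conj_re, Complex.conj_im]
  ring

lemma integral_densityDeriv2_zero (hΩ : IsOpen Ω) (hh : ContDiffOn ℝ 1 h Ω)
    (hS : IntegrableOn (energyDensity h) Ω) (hη : ContDiff ℝ 1 η) (hηc : HasCompactSupport η) :
    ∫ w in Ω, densityDeriv2 h η 0 w =
      8 * ((1 / 2) * (∫ w in Ω, energyDensity h w * ‖wdzbar η w‖ ^ 2) +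
        (∫ w in Ω, hopf h w * wdz η w * wdzbar η w).re) := by
  have hwη : Continuous (wdz η) := continuous_wdzCLM.comp (hη.continuous_fderiv one_ne_zero)
  have hwbη : Continuous (wdzbar η) := continuous_wdzbarCLM.comp (hη.continuous_fderiv one_ne_zero)
  obtain ⟨Ca, hCa⟩ := hwη.bounded_above_of_compact_support hηc.wdz
  obtain ⟨Cb, hCb⟩ := hwbη.bounded_above_of_compact_support hηc.wdzbar
  have hP : IntegrableOn (hopf h) Ω :=
    hS.mono' (((hh.continuousOn_wdz hΩ).mul (Complex.continuous_conj.comp_continuousOn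
      (hh.continuousOn_wdzbar hΩ))).aestronglyMeasurable hΩ.measurableSet)
      (ae_of_all _ (norm_hopf_le_energyDensity h))
  have hint₁ : IntegrableOn (fun w => energyDensity h w * ‖wdzbar η w‖ ^ 2) Ω :=
    hS.mul_bdd (hwbη.norm.pow 2).aestronglyMeasurable (ae_of_all _ fun w => by
      rw [norm_pow, norm_norm]; exact pow_le_pow_left₀ (norm_nonneg _) (hCb w) 2)
  have hint₂ : IntegrableOn (fun w => hopf h w * wdz η w * wdzbar η w) Ω := by
    simp_rw [mul_assoc]
    exact hP.mul_bdd (g := fun w => wdz η w * wdzbar η w)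
      (hwη.mul hwbη).aestronglyMeasurable (ae_of_all _ fun w => by
        rw [norm_mul]
        exact mul_le_mul (hCa w) (hCb w) (norm_nonneg _) ((norm_nonneg _).trans (hCa w)))
  have hint₂re : IntegrableOn (fun w => (hopf h w * wdz η w * wdzbar η w).re) Ω := hint₂.re
  have hre : ∫ w in Ω, (hopf h w * wdz η w * wdzbar η w).re =
      (∫ w in Ω, hopf h w * wdz η w * wdzbar η w).re := integral_re hint₂
  simp_rw [densityDeriv2_zero]
  rw [integral_add (hint₁.const_mul 4) (hint₂re.const_mul 8), integral_const_mul,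
    integral_const_mul, hre]
  ring

end InnerVariation

open InnerVariation

theorem stmt_5_general (Ω : Set ℂ) (hΩo : IsOpen Ω)
    (h : ℂ → ℂ) (hh : ContDiffOn ℝ 1 h Ω)
    (hfin : IntegrableOn
      (fun z => (norm (wdz h z)) ^ 2 + (norm (wdzbar h z)) ^ 2) Ω volume)
    (η : ℂ → ℂ) (hη : IsTestFunction Ω η)
    (ε₀ : ℝ) (hε₀ : 0 < ε₀)
    (g : ℝ → ℂ → ℂ)
    (hbij : ∀ ε : ℝ, |ε| < ε₀ → Set.BijOn (fun w => w + (ε : ℂ) * η w) Ω Ω)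
    (hjac : ∀ ε : ℝ, |ε| < ε₀ → ∀ w ∈ Ω,
      (norm (1 + (ε : ℂ) * wdz η w)) ^ 2 - ε ^ 2 * (norm (wdzbar η w)) ^ 2 > 0)
    (hgsmooth : ∀ ε : ℝ, |ε| < ε₀ → ContDiffOn ℝ (⊤ : ℕ∞) (g ε) Ω)
    (hgl : ∀ ε : ℝ, |ε| < ε₀ → ∀ w ∈ Ω, g ε (w + (ε : ℂ) * η w) = w)
    (e : ℝ → ℝ) (he : ∀ ε : ℝ, e ε = energy Ω (h ∘ g ε)) :
    (∀ᶠ ε in nhds (0 : ℝ), DifferentiableAt ℝ e ε) ∧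
    HasDerivAt (deriv e)
      (8 * ((1 / 2) * (∫ z in Ω,
          ((norm (wdz h z)) ^ 2 + (norm (wdzbar h z)) ^ 2) *
            (norm (wdzbar η z)) ^ 2)
        + (∫ z in Ω,
            wdz h z * (starRingEnd ℂ) (wdzbar h z) * wdz η z * wdzbar η z).re)) 0 := by
  obtain ⟨hηsmooth, hηc, hηΩ⟩ := hη
  have hη1 : ContDiff ℝ 1 η := hηsmooth.of_le (by simp)
  set U : Set ℝ := {t | |t| < ε₀}
  have hU : IsOpen U := isOpen_lt continuous_abs continuous_const
  have h0U : (0 : ℝ) ∈ U := by simpa [U] using hε₀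
  have hJ (t : ℝ) (ht : t ∈ U) (w : ℂ) : 0 < jacobian η t w :=
    jacobian_pos_of_tsupport_subset hηΩ (fun w hw => by rw [jacobian_eq]; exact hjac t ht w hw) w
  have hψ (t : ℝ) (ht : t ∈ U) :=
    hasDerivAt_integral_densities (h := h) hΩo hh hη1 hηc hηΩ hU hJ ht
  have he_eq (t : ℝ) (ht : t ∈ U) :
      e t = (∫ w in Ω, energyDensity h w) + ∫ w in Ω, density h η t w :=
    (he t).trans <| energy_comp_eq hΩo (hh.differentiableOn one_ne_zero)
      (hη1.differentiable one_ne_zero) (hbij t ht) ((hgsmooth t ht).differentiableOn (by simp))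
      (hgl t ht) (fun w _ => hJ t ht w) hfin (hψ t ht).1
  have hde (t : ℝ) (ht : t ∈ U) : HasDerivAt e (∫ w in Ω, densityDeriv h η t w) t :=
    ((hψ t ht).2.1.const_add _).congr_of_eventuallyEq
      (Filter.eventually_of_mem (hU.mem_nhds ht) he_eq)
  refine ⟨Filter.eventually_of_mem (hU.mem_nhds h0U) fun t ht => (hde t ht).differentiableAt, ?_⟩
  exact ((hψ 0 h0U).2.2.congr_of_eventuallyEq (Filter.eventually_of_mem (hU.mem_nhds h0U)
    fun t ht => (hde t ht).deriv)).congr_deriv (integral_densityDeriv2_zero hΩo hh hfin hη1 hηc)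

/-- The second inner variation of the Dirichlet energy at `ε = 0`. -/
theorem stmt_5 (Ω : Set ℂ) (hΩo : IsOpen Ω) (hΩb : Bornology.IsBounded Ω)
    (h : ℂ → ℂ) (hh : ContDiffOn ℝ 1 h Ω)
    (hfin : IntegrableOn
      (fun z => (norm (wdz h z)) ^ 2 + (norm (wdzbar h z)) ^ 2) Ω volume)
    (η : ℂ → ℂ) (hη : IsTestFunction Ω η)
    (ε₀ : ℝ) (hε₀ : 0 < ε₀)
    (g : ℝ → ℂ → ℂ)
    (hbij : ∀ ε : ℝ, |ε| < ε₀ → Set.BijOn (fun w => w + (ε : ℂ) * η w) Ω Ω)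
    (hjac : ∀ ε : ℝ, |ε| < ε₀ → ∀ w ∈ Ω,
      (norm (1 + (ε : ℂ) * wdz η w)) ^ 2 - ε ^ 2 * (norm (wdzbar η w)) ^ 2 > 0)
    (hgsmooth : ∀ ε : ℝ, |ε| < ε₀ → ContDiffOn ℝ (⊤ : ℕ∞) (g ε) Ω)
    (hgl : ∀ ε : ℝ, |ε| < ε₀ → ∀ w ∈ Ω, g ε (w + (ε : ℂ) * η w) = w)
    (hgr : ∀ ε : ℝ, |ε| < ε₀ → ∀ w ∈ Ω, g ε w + (ε : ℂ) * η (g ε w) = w)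
    (e : ℝ → ℝ) (he : ∀ ε : ℝ, e ε = energy Ω (h ∘ g ε)) :
    (∀ᶠ ε in nhds (0 : ℝ), DifferentiableAt ℝ e ε) ∧
    HasDerivAt (deriv e)
      (8 * ((1 / 2) * (∫ z in Ω,
          ((norm (wdz h z)) ^ 2 + (norm (wdzbar h z)) ^ 2) *
            (norm (wdzbar η z)) ^ 2)
        + (∫ z in Ω,
            wdz h z * (starRingEnd ℂ) (wdzbar h z) * wdz η z * wdzbar η z).re)) 0 :=
  stmt_5_general Ω hΩo h hh hfin η hη ε₀ hε₀ g hbij hjac hgsmooth hgl e he
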